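/- For all i ≥ 4, m ∈ {1,2,3} and j ∈ {1,2}, the edge-sum chromatic number of H^{-i,3}_{m,j} equals i+2, which strictly exceeds its chromatic index i+1; hence H^{-i,3}_{m,j} is a non-perfect edge-sum color graph. -/

import Mathlib

/-- The integral sum graph on vertex set `{r, ..., s} ⊆ ℤ`:
distinct `u, v` are adjacent iff `u + v` also lies in `{r, ..., s}`. -/
def intervalSumGraph (r s : ℤ) : SimpleGraph ℤ where
  Adj u v := u ≠ v ∧ u ∈ Set.Icc r s ∧ v ∈ Set.Icc r s ∧ u + v ∈ Set.Icc r s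
  symm := by
    constructor
    rintro u v ⟨h1, h2, h3, h4⟩
    exact ⟨h1.symm, h3, h2, by rwa [add_comm]⟩
  loopless := ⟨fun u h => h.1 rfl⟩

/-- The graph `H^{-i,s}_{m,j}`: obtained from the integral sum graph `G_{-i,s}`
by deleting the vertices `-m` and `j` and all edges whose endpoint labels sum
to `-m` or to `j`. -/
def HGraph (i s m j : ℤ) : SimpleGraph ℤ where
  Adj u v := u ≠ v ∧ u ∈ Set.Icc (-i) s ∧ v ∈ Set.Icc (-i) s ∧ u + v ∈ Set.Icc (-i) s ∧
    u ≠ -m ∧ v ≠ -m ∧ u ≠ j ∧ v ≠ j ∧ u + v ≠ -m ∧ u + v ≠ j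
  symm := by
    constructor
    rintro u v ⟨h1, h2, h3, h4, h5, h6, h7, h8, h9, h10⟩
    exact ⟨h1.symm, h3, h2, by rwa [add_comm], h6, h5, h8, h7,
      by rwa [add_comm], by rwa [add_comm]⟩
  loopless := ⟨fun u h => h.1 rfl⟩

/-- The chromatic index of a graph: the least `n` such that there is a proper
edge coloring with `n` colors (distinct edges sharing a vertex get distinct colors). -/
noncomputable def chromaticIndex {V : Type*} (G : SimpleGraph V) : ℕ :=
  sInf {n : ℕ | ∃ c : Sym2 V → Fin n,
    ∀ e ∈ G.edgeSet, ∀ f ∈ G.edgeSet, e ≠ f → (∃ v, v ∈ e ∧ v ∈ f) → c e ≠ c f}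

/-- The sum of the two endpoint labels of an edge. -/
def edgeSum (e : Sym2 ℤ) : ℤ := Sym2.lift ⟨fun a b => a + b, fun a b => add_comm a b⟩ e

/-- The edge-sum chromatic number: the number of nonempty edge-sum color classes. -/
noncomputable def edgeSumChromatic (G : SimpleGraph ℤ) : ℕ :=
  {k : ℤ | ∃ e ∈ G.edgeSet, edgeSum e = k}.ncard

/-!
The edge sums of `H^{-i,3}_{m,j}` are exactly `{-i, …, 3} \ {-m, j}`: a nonzero sum `k` is
realised by the edge `{0, k}` and the sum `0` by some `{a, -a}`. This gives `i + 2` classes.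
The vertex `0` is adjacent to every vertex of `{-i, …, 3} \ {0, -m, j}`, so at least `i + 1`
colours are needed. Conversely the edge-sum colouring is proper, and once the edge `{0, -i}` is
recoloured `0` the sum classes `3` and `-i` can share a colour, leaving `i + 1`.
-/

section EdgeColoring

variable {V α β : Type*} {G H : SimpleGraph V} {c : Sym2 V → α}

def IsProperEdgeColoring (G : SimpleGraph V) (c : Sym2 V → α) : Prop :=
  ∀ e ∈ G.edgeSet, ∀ f ∈ G.edgeSet, e ≠ f → (∃ v, v ∈ e ∧ v ∈ f) → c e ≠ c f

theorem IsProperEdgeColoring.mono (hc : IsProperEdgeColoring H c) (hGH : G ≤ H) :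
    IsProperEdgeColoring G c :=
  fun e he f hf => hc e (SimpleGraph.edgeSet_mono hGH he) f (SimpleGraph.edgeSet_mono hGH hf)

theorem IsProperEdgeColoring.comp_of_injOn (hc : IsProperEdgeColoring G c) {g : α → β}
    {S : Set α} (hcS : ∀ e ∈ G.edgeSet, c e ∈ S) (hg : S.InjOn g) :
    IsProperEdgeColoring G (g ∘ c) :=
  fun e he f hf hef hv hgc => hc e he f hf hef hv (hg (hcS e he) (hcS f hf) hgc)

theorem IsProperEdgeColoring.injOn_neighborSet (hc : IsProperEdgeColoring G c) (v : V) :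
    (G.neighborSet v).InjOn fun w => c s(v, w) := by
  intro w hw w' hw' hcw
  by_contra hne
  exact hc _ hw _ hw' (fun h => hne (Sym2.congr_right.mp h))
    ⟨v, Sym2.mem_mk_left v w, Sym2.mem_mk_left v w'⟩ hcw

theorem IsProperEdgeColoring.exists_fin_card (hc : IsProperEdgeColoring G c) {S : Finset α}
    (hcS : ∀ e ∈ G.edgeSet, c e ∈ S) (hS : S.Nonempty) :
    ∃ c' : Sym2 V → Fin S.card, IsProperEdgeColoring G c' := by
  classical
  obtain ⟨a₀, ha₀⟩ := hS
  let g : α → Fin S.card := fun a =>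
    S.equivFin (if h : a ∈ S then ⟨a, h⟩ else ⟨a₀, ha₀⟩)
  refine ⟨g ∘ c, hc.comp_of_injOn hcS fun a ha b hb hab => ?_⟩
  simpa [Finset.mem_coe.mp ha, Finset.mem_coe.mp hb] using S.equivFin.injective hab

theorem card_le_chromaticIndex (hG : ∃ n, ∃ c : Sym2 V → Fin n, IsProperEdgeColoring G c)
    (v : V) {F : Finset V} (hF : ∀ w ∈ F, G.Adj v w) : F.card ≤ chromaticIndex G := by
  obtain ⟨c, hc⟩ := Nat.sInf_mem hG
  calc F.card ≤ (Finset.univ : Finset (Fin (chromaticIndex G))).card :=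
        Finset.card_le_card_of_injOn _ (fun _ _ => Finset.mem_univ _)
          ((hc.injOn_neighborSet v).mono hF)
    _ = chromaticIndex G := Finset.card_fin _

end EdgeColoring

theorem edgeSum_mk (a b : ℤ) : edgeSum s(a, b) = a + b := rfl

theorem intervalSumGraph_adj_iff {r s a b : ℤ} :
    (intervalSumGraph r s).Adj a b ↔
      a ≠ b ∧ r ≤ a ∧ a ≤ s ∧ r ≤ b ∧ b ≤ s ∧ r ≤ a + b ∧ a + b ≤ s := by
  simp only [intervalSumGraph, Set.mem_Icc, and_assoc]

theorem hGraph_adj_iff {i s m j a b : ℤ} :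
    (HGraph i s m j).Adj a b ↔
      a ≠ b ∧ -i ≤ a ∧ a ≤ s ∧ -i ≤ b ∧ b ≤ s ∧ -i ≤ a + b ∧ a + b ≤ s ∧
        a ≠ -m ∧ b ≠ -m ∧ a ≠ j ∧ b ≠ j ∧ a + b ≠ -m ∧ a + b ≠ j := by
  simp only [HGraph, Set.mem_Icc, and_assoc]

theorem hGraph_le_intervalSumGraph (i s m j : ℤ) : HGraph i s m j ≤ intervalSumGraph (-i) s :=
  fun a b h => intervalSumGraph_adj_iff.mpr (by rw [hGraph_adj_iff] at h; omega)

theorem edgeSum_mem_of_mem_edgeSet_hGraph {i s m j : ℤ} {e : Sym2 ℤ}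
    (he : e ∈ (HGraph i s m j).edgeSet) : edgeSum e ∈ Finset.Icc (-i) s \ {-m, j} := by
  induction e using Sym2.ind with
  | _ a b =>
    rw [SimpleGraph.mem_edgeSet, hGraph_adj_iff] at he
    simp only [edgeSum_mk, Finset.mem_sdiff, Finset.mem_Icc, Finset.mem_insert,
      Finset.mem_singleton]
    omega

theorem card_Icc_sdiff {a b : ℤ} {T : Finset ℤ} (hT : T ⊆ Finset.Icc a b) :
    (Finset.Icc a b \ T).card = (b + 1 - a).toNat - T.card := by
  rw [Finset.card_sdiff_of_subset hT, Int.card_Icc]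

/-- Merging the edge sums `3` and `-i` creates a single clash, between `{0, 3}` and `{0, -i}`
at the vertex `0`; the edge `{0, -i}` takes the colour `0` instead, which is free at both its
endpoints because the sum-`0` edge `{-i, i}` is absent for `i > 3`. -/
def foldedEdgeSum (i : ℤ) (e : Sym2 ℤ) : ℤ :=
  if e = s(0, -i) then 0 else if edgeSum e = 3 then -i else edgeSum e

theorem isProperEdgeColoring_foldedEdgeSum {i : ℤ} (hi : 4 ≤ i) :
    IsProperEdgeColoring (intervalSumGraph (-i) 3) (foldedEdgeSum i) := by
  rintro e he f hf hef ⟨x, hxe, hxf⟩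
  obtain ⟨v, rfl⟩ := Sym2.mem_iff_exists.mp hxe
  obtain ⟨w, rfl⟩ := Sym2.mem_iff_exists.mp hxf
  rw [SimpleGraph.mem_edgeSet, intervalSumGraph_adj_iff] at he hf
  have hvw : v ≠ w := fun h => hef (h ▸ rfl)
  simp only [foldedEdgeSum, edgeSum_mk, Sym2.eq_iff]
  split_ifs <;> omega

section HGraph

variable {m j : ℤ}

theorem edgeSums_hGraph {i : ℤ} (hi : 3 ≤ i) (hm : 1 ≤ m ∧ m ≤ 3)
    (hj : 1 ≤ j ∧ j ≤ 2) :
    {k : ℤ | ∃ e ∈ (HGraph i 3 m j).edgeSet, edgeSum e = k} =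
      ↑(Finset.Icc (-i) 3 \ {-m, j}) := by
  ext k
  refine ⟨fun ⟨e, he, hk⟩ => hk ▸ edgeSum_mem_of_mem_edgeSet_hGraph he, fun hk => ?_⟩
  simp only [Finset.coe_sdiff, Finset.coe_Icc, Finset.coe_insert, Finset.coe_singleton,
    Set.mem_sdiff, Set.mem_Icc, Set.mem_insert_iff, Set.mem_singleton_iff] at hk
  by_cases hk0 : k = 0
  · obtain ⟨a, ha⟩ : ∃ a : ℤ, 1 ≤ a ∧ a ≤ 3 ∧ a ≠ m ∧ a ≠ j :=
      ⟨if m = 3 then 3 - j else 3, by split_ifs <;> omega⟩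
    exact ⟨s(a, -a), hGraph_adj_iff.mpr (by omega), by rw [edgeSum_mk]; omega⟩
  · exact ⟨s(0, k), hGraph_adj_iff.mpr (by omega), by rw [edgeSum_mk]; omega⟩

theorem edgeSumChromatic_hGraph {i : ℕ} (hi : 3 ≤ i) (hm : 1 ≤ m ∧ m ≤ 3)
    (hj : 1 ≤ j ∧ j ≤ 2) : edgeSumChromatic (HGraph i 3 m j) = i + 2 := by
  have hpair : ({-m, j} : Finset ℤ).card = 2 := Finset.card_pair (by omega)
  rw [edgeSumChromatic, edgeSums_hGraph (by omega) hm hj, Set.ncard_coe_finset,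
    card_Icc_sdiff, hpair]
  · omega
  · simp only [Finset.insert_subset_iff, Finset.singleton_subset_iff, Finset.mem_Icc]
    omega

theorem foldedEdgeSum_mem {i : ℤ} (hi : 4 ≤ i) (hm : 1 ≤ m ∧ m ≤ 3) (hj : 1 ≤ j)
    {e : Sym2 ℤ} (he : e ∈ (HGraph i 3 m j).edgeSet) :
    foldedEdgeSum i e ∈ Finset.Icc (-i) 2 \ {-m, j} := by
  have hsum := edgeSum_mem_of_mem_edgeSet_hGraph he
  simp only [Finset.mem_sdiff, Finset.mem_Icc, Finset.mem_insert, Finset.mem_singleton]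
    at hsum ⊢
  unfold foldedEdgeSum
  split_ifs <;> omega

theorem hGraph_adj_zero {i : ℤ} (hi : 0 ≤ i) (hm : 1 ≤ m) (hj : 1 ≤ j) {w : ℤ}
    (hw : w ∈ Finset.Icc (-i) 3 \ {0, -m, j}) : (HGraph i 3 m j).Adj 0 w := by
  simp only [Finset.mem_sdiff, Finset.mem_Icc, Finset.mem_insert, Finset.mem_singleton] at hw
  exact hGraph_adj_iff.mpr (by omega)

theorem chromaticIndex_hGraph {i : ℕ} (hi : 4 ≤ i) (hm : 1 ≤ m ∧ m ≤ 3)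
    (hj : 1 ≤ j ∧ j ≤ 2) : chromaticIndex (HGraph i 3 m j) = i + 1 := by
  set S := Finset.Icc (-(i : ℤ)) 2 \ {-m, j}
  set F := Finset.Icc (-(i : ℤ)) 3 \ {0, -m, j}
  have hS : S.card = i + 1 := by
    rw [card_Icc_sdiff, Finset.card_pair (by omega)]
    · omega
    · simp only [Finset.insert_subset_iff, Finset.singleton_subset_iff, Finset.mem_Icc]
      omega
  have hF : F.card = i + 1 := by
    rw [card_Icc_sdiff, Finset.card_insert_of_notMem, Finset.card_pair (by omega)]
    · omega
    · simp only [Finset.mem_insert, Finset.mem_singleton]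
      omega
    · simp only [Finset.insert_subset_iff, Finset.singleton_subset_iff, Finset.mem_Icc]
      omega
  have hproper : IsProperEdgeColoring (HGraph i 3 m j) (foldedEdgeSum i) :=
    (isProperEdgeColoring_foldedEdgeSum (by omega)).mono (hGraph_le_intervalSumGraph _ 3 m j)
  obtain ⟨c, hc⟩ := hproper.exists_fin_card (fun e he => foldedEdgeSum_mem (by omega) hm hj.1 he)
    ((Finset.card_pos (s := S)).mp (by omega))
  apply le_antisymm
  · exact hS ▸ Nat.sInf_le ⟨c, hc⟩
  · exact hF ▸ card_le_chromaticIndex ⟨_, c, hc⟩ 0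
      fun w hw => hGraph_adj_zero (by omega) hm.1 hj.1 hw

end HGraph

theorem edgeSumChromatic_H_i_3_m_j (i : ℕ) (hi : 4 ≤ i) (m j : ℤ)
    (hm : m ∈ ({1, 2, 3} : Set ℤ)) (hj : j ∈ ({1, 2} : Set ℤ)) :
    edgeSumChromatic (HGraph (i : ℤ) 3 m j) = i + 2 ∧
    chromaticIndex (HGraph (i : ℤ) 3 m j) = i + 1 ∧
    chromaticIndex (HGraph (i : ℤ) 3 m j) < edgeSumChromatic (HGraph (i : ℤ) 3 m j) := by
  simp only [Set.mem_insert_iff, Set.mem_singleton_iff] at hm hj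
  have hm' : 1 ≤ m ∧ m ≤ 3 := by omega
  have hj' : 1 ≤ j ∧ j ≤ 2 := by omega
  have hsum := edgeSumChromatic_hGraph (i := i) (by omega) hm' hj'
  have hidx := chromaticIndex_hGraph hi hm' hj'
  exact ⟨hsum, hidx, by omega⟩
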